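/- arXiv:1009.1886 — 5 statements merged into one kernel-verified Lean document; each statement's English description precedes it below -/
import Mathlib

section
/- If p_i < p_j < p_k, then x_{ij}(y) < x_{ik}(y) < x_{jk}(y) for all y < y_{ijk}, and x_{ij}(y) > x_{ik}(y) > x_{jk}(y) for all y > y_{ijk}. -/
/-! The three lines meet at height `y_{ijk}`, and their consecutive differences are
`x_{ik} - x_{ij} = (p_k - p_j) (y_{ijk} - y)` and `x_{jk} - x_{ik} = (p_j - p_i) (y_{ijk} - y)`,
so the sign of `y_{ijk} - y` decides their order. -/

noncomputable def xline (pa pb ca cb y : ℝ) : ℝ := -(pa + pb) * y - (ca - cb) / (pa - pb)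

noncomputable def ycrit (pi pj pk ci cj ck : ℝ) : ℝ :=
  -(((ci - cj) / (pi - pj) - (ci - ck) / (pi - pk)) / (pj - pk))

section

variable {pi pj pk : ℝ} (ci cj ck y : ℝ)

theorem xline_sub_xline_of_ne_left (hij : pi ≠ pj) (hik : pi ≠ pk) (hjk : pj ≠ pk) :
    xline pi pk ci ck y - xline pi pj ci cj y = (pk - pj) * (ycrit pi pj pk ci cj ck - y) := by
  have := sub_ne_zero.mpr hij; have := sub_ne_zero.mpr hik; have := sub_ne_zero.mpr hjk
  unfold xline ycrit
  field_simp
  ring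

theorem xline_sub_xline_of_ne_right (hij : pi ≠ pj) (hik : pi ≠ pk) (hjk : pj ≠ pk) :
    xline pj pk cj ck y - xline pi pk ci ck y = (pj - pi) * (ycrit pi pj pk ci cj ck - y) := by
  have := sub_ne_zero.mpr hij; have := sub_ne_zero.mpr hik; have := sub_ne_zero.mpr hjk
  unfold xline ycrit
  field_simp
  ring

end

/-- Ordering of the boundary lines below and above the critical value y_{ijk}. -/
theorem xline_order (pi pj pk ci cj ck : ℝ) (hij : pi < pj) (hjk : pj < pk) :
    (∀ y, y < ycrit pi pj pk ci cj ck →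
      xline pi pj ci cj y < xline pi pk ci ck y ∧
      xline pi pk ci ck y < xline pj pk cj ck y) ∧
    (∀ y, y > ycrit pi pj pk ci cj ck →
      xline pi pj ci cj y > xline pi pk ci ck y ∧
      xline pi pk ci ck y > xline pj pk cj ck y) := by
  have hik := hij.trans hjk
  have left y := xline_sub_xline_of_ne_left ci cj ck y hij.ne hik.ne hjk.ne
  have right y := xline_sub_xline_of_ne_right ci cj ck y hij.ne hik.ne hjk.ne
  refine ⟨fun y hy => ⟨?_, ?_⟩, fun y hy => ⟨?_, ?_⟩⟩
  · exact sub_pos.mp <| (left y).symm ▸ mul_pos (sub_pos.mpr hjk) (sub_pos.mpr hy)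
  · exact sub_pos.mp <| (right y).symm ▸ mul_pos (sub_pos.mpr hij) (sub_pos.mpr hy)
  · exact sub_neg.mp <| (left y).symm ▸ mul_neg_of_pos_of_neg (sub_pos.mpr hjk) (sub_neg.mpr hy)
  · exact sub_neg.mp <| (right y).symm ▸ mul_neg_of_pos_of_neg (sub_pos.mpr hij) (sub_neg.mpr hy)
end

section
/- If p_i < p_j < p_k < p_l, then y_{ijk}(t) < y_{ijl}(t) < y_{ikl}(t) < y_{jkl}(t) for all t < t_{ijkl}, and the reversed strict inequalities hold for all t > t_{ijkl}. -/
noncomputable def c3s (pi pj pk ci cj ck : ℝ) : ℝ :=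
  ci / ((pi - pj) * (pi - pk)) + cj / ((pj - pi) * (pj - pk)) + ck / ((pk - pi) * (pk - pj))

noncomputable def yfun (pi pj pk ci cj ck t : ℝ) : ℝ :=
  -(pi + pj + pk) * t - c3s pi pj pk ci cj ck

noncomputable def c4s (pi pj pk pl ci cj ck cl : ℝ) : ℝ :=
  ci / ((pi - pj) * (pi - pk) * (pi - pl)) + cj / ((pj - pi) * (pj - pk) * (pj - pl)) +
    ck / ((pk - pi) * (pk - pj) * (pk - pl)) + cl / ((pl - pi) * (pl - pj) * (pl - pk))

noncomputable def tcrit4 (pi pj pk pl ci cj ck cl : ℝ) : ℝ :=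
  -c4s pi pj pk pl ci cj ck cl

/-!
`c3s` and `c4s` are the divided differences of the data `c` at the nodes `p`. Divided differences
are symmetric in the nodes and satisfy `c_{abd} - c_{abc} = (p_d - p_c) c_{abcd}`, so each
consecutive difference of the `y`'s equals a positive gap between nodes times `t_{ijkl} - t`,
which changes sign exactly at `t_{ijkl}`.
-/

section Symmetry

variable (a b c d ca cb cc cd t : ℝ)

theorem c3s_rotate : c3s b c a cb cc ca = c3s a b c ca cb cc := by
  unfold c3s; ring

theorem c3s_swap23 : c3s a c b ca cc cb = c3s a b c ca cb cc := by
  unfold c3s; ring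

theorem yfun_rotate : yfun b c a cb cc ca t = yfun a b c ca cb cc t := by
  rw [yfun, yfun, c3s_rotate]; ring

theorem yfun_swap23 : yfun a c b ca cc cb t = yfun a b c ca cb cc t := by
  rw [yfun, yfun, c3s_swap23]; ring

theorem tcrit4_rotate : tcrit4 b c d a cb cc cd ca = tcrit4 a b c d ca cb cc cd := by
  unfold tcrit4 c4s; ring

theorem tcrit4_rotate_tail : tcrit4 a d b c ca cd cb cc = tcrit4 a b c d ca cb cc cd := by
  unfold tcrit4 c4s; ring

end Symmetry

section Recurrence

variable {a b c d : ℝ} (ca cb cc cd t : ℝ)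
  (hab : a ≠ b) (hac : a ≠ c) (had : a ≠ d) (hbc : b ≠ c) (hbd : b ≠ d) (hcd : c ≠ d)
include hab hac had hbc hbd hcd

theorem c3s_sub_c3s :
    c3s a b d ca cb cd - c3s a b c ca cb cc = (d - c) * c4s a b c d ca cb cc cd := by
  unfold c3s c4s
  field_simp
  ring

theorem yfun_sub_yfun_last :
    yfun a b d ca cb cd t - yfun a b c ca cb cc t
      = (d - c) * (tcrit4 a b c d ca cb cc cd - t) := by
  rw [yfun, yfun, tcrit4]
  linear_combination -(c3s_sub_c3s ca cb cc cd hab hac had hbc hbd hcd)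

theorem yfun_sub_yfun_mid :
    yfun a c d ca cc cd t - yfun a b d ca cb cd t
      = (c - b) * (tcrit4 a b c d ca cb cc cd - t) := by
  have h := yfun_sub_yfun_last ca cd cb cc t had hab hac hbd.symm hcd.symm hbc
  rwa [yfun_swap23 a c d, yfun_swap23 a b d, tcrit4_rotate_tail] at h

theorem yfun_sub_yfun_first :
    yfun b c d cb cc cd t - yfun a c d ca cc cd t
      = (b - a) * (tcrit4 a b c d ca cb cc cd - t) := by
  have h := yfun_sub_yfun_last cc cd ca cb t hcd hac.symm hbc.symm had.symm hbd.symm hab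
  rwa [yfun_rotate b c d, yfun_rotate a c d, tcrit4_rotate b c d a, tcrit4_rotate] at h

end Recurrence

/-- Ordering of the critical y-values before and after the critical time t_{ijkl}. -/
theorem ycrit_order (pi pj pk pl ci cj ck cl : ℝ)
    (hij : pi < pj) (hjk : pj < pk) (hkl : pk < pl) :
    (∀ t, t < tcrit4 pi pj pk pl ci cj ck cl →
      yfun pi pj pk ci cj ck t < yfun pi pj pl ci cj cl t ∧
      yfun pi pj pl ci cj cl t < yfun pi pk pl ci ck cl t ∧
      yfun pi pk pl ci ck cl t < yfun pj pk pl cj ck cl t) ∧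
    (∀ t, t > tcrit4 pi pj pk pl ci cj ck cl →
      yfun pi pj pk ci cj ck t > yfun pi pj pl ci cj cl t ∧
      yfun pi pj pl ci cj cl t > yfun pi pk pl ci ck cl t ∧
      yfun pi pk pl ci ck cl t > yfun pj pk pl cj ck cl t) := by
  have hik := hij.trans hjk
  have hil := hik.trans hkl
  have hjl := hjk.trans hkl
  have gap_kl t := yfun_sub_yfun_last ci cj ck cl t hij.ne hik.ne hil.ne hjk.ne hjl.ne hkl.ne
  have gap_jk t := yfun_sub_yfun_mid ci cj ck cl t hij.ne hik.ne hil.ne hjk.ne hjl.ne hkl.ne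
  have gap_ij t := yfun_sub_yfun_first ci cj ck cl t hij.ne hik.ne hil.ne hjk.ne hjl.ne hkl.ne
  refine ⟨fun t ht => ⟨?_, ?_, ?_⟩, fun t ht => ⟨?_, ?_, ?_⟩⟩
  · exact sub_pos.1 (gap_kl t ▸ mul_pos (sub_pos.2 hkl) (sub_pos.2 ht))
  · exact sub_pos.1 (gap_jk t ▸ mul_pos (sub_pos.2 hjk) (sub_pos.2 ht))
  · exact sub_pos.1 (gap_ij t ▸ mul_pos (sub_pos.2 hij) (sub_pos.2 ht))
  · exact sub_neg.1 (gap_kl t ▸ mul_neg_of_pos_of_neg (sub_pos.2 hkl) (sub_neg.2 ht))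
  · exact sub_neg.1 (gap_jk t ▸ mul_neg_of_pos_of_neg (sub_pos.2 hjk) (sub_neg.2 ht))
  · exact sub_neg.1 (gap_ij t ▸ mul_neg_of_pos_of_neg (sub_pos.2 hij) (sub_neg.2 ht))
end

section
/- Under the substitution c_k ↦ c_k + p_k^r t for a fixed real t and natural number r, the divided difference c_{k_1…k_n} transforms to c_{k_1…k_n} + h_{r-n+1}(p_{k_1},…,p_{k_n}) t, where h_m is the complete homogeneous symmetric polynomial of degree m (with h_0 = 1 and h_m = 0 for m < 0). -/
/-!
Divided differences are linear in the values, so only c_k = p_k ^ r matters. The divided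
difference of x * g over p_0, …, p_n is p_0 times that of g plus that of g over p_1, …, p_n, so
the divided differences of the powers p ^ r obey the recursion
h_m(x_0, …, x_n) = h_m(x_1, …, x_n) + x_0 h_{m-1}(x_0, …, x_n) of the complete homogeneous
polynomials. Induction on r leaves r = 0, where ∑ i, 1 / ∏ j ≠ i, (p i - p j) is the leading
coefficient of the Lagrange interpolant of the constant 1.
-/

/-- Divided difference of c with respect to the nodes p. -/
noncomputable def divDiffFin (n : ℕ) (p c : Fin n → ℝ) : ℝ :=
  ∑ i, c i / ∏ j ∈ Finset.univ.erase i, (p i - p j)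

/-- Complete homogeneous symmetric polynomial of degree m in n variables. -/
noncomputable def hsym (n m : ℕ) (p : Fin n → ℝ) : ℝ :=
  ∑ a ∈ Finset.Nat.antidiagonalTuple n m, ∏ i, p i ^ a i

/-- Complete homogeneous symmetric polynomial with h_m = 0 for m < 0. -/
noncomputable def hsymZ (n : ℕ) (m : ℤ) (p : Fin n → ℝ) : ℝ :=
  if m < 0 then 0 else hsym n m.toNat p

open Finset Polynomial

theorem Finset.Nat.sum_antidiagonalTuple_succ {M : Type*} [AddCommMonoid M] (k n : ℕ)
    (f : (Fin (k + 1) → ℕ) → M) :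
    ∑ x ∈ Nat.antidiagonalTuple (k + 1) n, f x
      = ∑ ij ∈ antidiagonal n, ∑ x ∈ Nat.antidiagonalTuple k ij.2, f (Fin.cons ij.1 x) := by
  have hval : (antidiagonal n).val = (List.Nat.antidiagonal n : Multiset (ℕ × ℕ)) := rfl
  simp only [Finset.sum, hval, Nat.antidiagonalTuple, Multiset.Nat.antidiagonalTuple,
    List.Nat.antidiagonalTuple, Multiset.map_coe, Multiset.sum_coe, List.flatMap,
    List.map_flatten, List.sum_flatten, List.map_map, Function.comp_def]

theorem Fin.prod_univ_erase_succ {M : Type*} [CommMonoid M] {k : ℕ} (i : Fin k)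
    (f : Fin (k + 1) → M) :
    ∏ j ∈ univ.erase i.succ, f j = f 0 * ∏ j ∈ univ.erase i, f j.succ := by
  simp only [← filter_ne', prod_filter, Fin.prod_univ_succ, ne_eq, Fin.succ_inj]
  simp [(Fin.succ_ne_zero i).symm]

@[simp]
lemma hsym_zero (n : ℕ) (p : Fin n → ℝ) : hsym n 0 p = 1 := by
  simp [hsym, Finset.Nat.antidiagonalTuple_zero_right]

lemma hsym_fin_zero {m : ℕ} (hm : m ≠ 0) (p : Fin 0 → ℝ) : hsym 0 m p = 0 := by
  obtain ⟨m, rfl⟩ := Nat.exists_eq_succ_of_ne_zero hm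
  simp [hsym]

lemma hsym_succ (n m : ℕ) (p : Fin (n + 1) → ℝ) :
    hsym (n + 1) m p = ∑ ij ∈ antidiagonal m, p 0 ^ ij.1 * hsym n ij.2 (Fin.tail p) := by
  simp only [hsym, Finset.Nat.sum_antidiagonalTuple_succ, Fin.prod_univ_succ, Fin.cons_zero,
    Fin.cons_succ, Finset.mul_sum, Fin.tail]

lemma hsym_succ_succ (n m : ℕ) (p : Fin (n + 1) → ℝ) :
    hsym (n + 1) (m + 1) p = hsym n (m + 1) (Fin.tail p) + p 0 * hsym (n + 1) m p := by
  simp only [hsym_succ, Finset.Nat.sum_antidiagonal_succ, Finset.mul_sum, pow_zero, one_mul,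
    pow_succ', mul_assoc]

lemma hsymZ_of_neg {n : ℕ} {m : ℤ} (hm : m < 0) (p : Fin n → ℝ) : hsymZ n m p = 0 :=
  if_pos hm

lemma hsymZ_fin_zero {m : ℤ} (hm : m ≠ 0) (p : Fin 0 → ℝ) : hsymZ 0 m p = 0 := by
  rcases lt_or_gt_of_ne hm with hm | hm
  · exact hsymZ_of_neg hm p
  · exact (if_neg hm.not_gt).trans (hsym_fin_zero (by omega) p)

lemma hsymZ_natCast (n m : ℕ) (p : Fin n → ℝ) : hsymZ n m p = hsym n m p := by
  simp [hsymZ]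

lemma hsymZ_succ (n : ℕ) (m : ℤ) (p : Fin (n + 1) → ℝ) :
    hsymZ (n + 1) m p = hsymZ n m (Fin.tail p) + p 0 * hsymZ (n + 1) (m - 1) p := by
  rcases lt_or_ge m 0 with hm | hm
  · simp [hsymZ_of_neg hm, hsymZ_of_neg (show m - 1 < 0 by omega)]
  lift m to ℕ using hm
  rcases m with _ | m
  · simp [hsymZ]
  · rw [Nat.cast_succ, add_sub_cancel_right, ← Nat.cast_succ, hsymZ_natCast, hsymZ_natCast,
      hsymZ_natCast]
    exact hsym_succ_succ n m p

lemma divDiffFin_add_mul (n : ℕ) (p c d : Fin n → ℝ) (t : ℝ) :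
    divDiffFin n p (fun k => c k + d k * t) = divDiffFin n p c + divDiffFin n p d * t := by
  simp only [divDiffFin, Finset.sum_mul, ← Finset.sum_add_distrib, add_div, div_mul_eq_mul_div]

lemma divDiffFin_eq_coeff_interpolate {n : ℕ} {p : Fin n → ℝ} (hp : Function.Injective p)
    (c : Fin n → ℝ) :
    divDiffFin n p c = (Lagrange.interpolate univ p c).coeff (n - 1) := by
  simp only [divDiffFin, Lagrange.interpolate_apply, finsetSum_coeff, coeff_C_mul]
  refine Finset.sum_congr rfl fun i _ => ?_
  have hdeg := Lagrange.natDegree_basis hp.injOn (mem_univ i)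
  rw [card_univ, Fintype.card_fin] at hdeg
  rw [← hdeg, coeff_natDegree, Lagrange.leadingCoeff_basis hp.injOn (mem_univ i), div_eq_mul_inv]

lemma divDiffFin_one {n : ℕ} {p : Fin n → ℝ} (hp : Function.Injective p) :
    divDiffFin n p (fun _ => 1) = if n = 1 then 1 else 0 := by
  rcases n with _ | k
  · simp [divDiffFin]
  · rw [divDiffFin_eq_coeff_interpolate hp, ← Pi.one_def,
      Lagrange.interpolate_one hp.injOn univ_nonempty, coeff_one]
    simp

lemma divDiffFin_succ_mul_nodes (k : ℕ) {p : Fin (k + 1) → ℝ} (hp : Function.Injective p)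
    (c : Fin (k + 1) → ℝ) :
    divDiffFin (k + 1) p (fun i => p i * c i)
      = divDiffFin k (Fin.tail p) (Fin.tail c) + p 0 * divDiffFin (k + 1) p c := by
  have hsub : divDiffFin (k + 1) p (fun i => p i * c i) - p 0 * divDiffFin (k + 1) p c
      = ∑ i, (p i - p 0) * c i / ∏ j ∈ univ.erase i, (p i - p j) := by
    simp only [divDiffFin, Finset.mul_sum, Finset.sum_sub_distrib, mul_div_assoc, sub_mul, sub_div]
  have htail : ∑ i, (p i - p 0) * c i / ∏ j ∈ univ.erase i, (p i - p j)
      = divDiffFin k (Fin.tail p) (Fin.tail c) := by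
    rw [Fin.sum_univ_succ, sub_self, zero_mul, zero_div, zero_add]
    refine Finset.sum_congr rfl fun i _ => ?_
    have hne : p i.succ - p 0 ≠ 0 := sub_ne_zero.2 (hp.ne (Fin.succ_ne_zero i))
    rw [Fin.prod_univ_erase_succ, mul_div_mul_left _ _ hne]
    rfl
  linarith

lemma divDiffFin_pow (r : ℕ) {n : ℕ} {p : Fin n → ℝ} (hp : Function.Injective p) :
    divDiffFin n p (fun k => p k ^ r) = hsymZ n ((r : ℤ) - n + 1) p := by
  induction r generalizing n with
  | zero =>
    rcases n with _ | _ | k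
    · rw [hsymZ_fin_zero (by norm_num)]
      simp [divDiffFin]
    · simpa [hsymZ] using divDiffFin_one hp
    · rw [hsymZ_of_neg (by push_cast; omega)]
      simpa using divDiffFin_one hp
  | succ r ih =>
    rcases n with _ | k
    · rw [hsymZ_fin_zero (by omega)]
      simp [divDiffFin]
    · simp only [pow_succ']
      rw [divDiffFin_succ_mul_nodes k hp, hsymZ_succ, ih hp,
        show Fin.tail (fun k => p k ^ r) = fun k => Fin.tail p k ^ r from rfl,
        ih (p := Fin.tail p) (hp.comp (Fin.succ_injective k))]
      congr 3 <;> push_cast <;> ring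

theorem divDiff_shift_general (n : ℕ) (p c : Fin n → ℝ)
    (hp : Function.Injective p) (r : ℕ) (t : ℝ) :
    divDiffFin n p (fun k => c k + p k ^ r * t)
      = divDiffFin n p c + hsymZ n ((r : ℤ) - n + 1) p * t := by
  rw [divDiffFin_add_mul, divDiffFin_pow r hp]

/-- Under c_k ↦ c_k + p_k^r t, the divided difference changes by
h_{r-n+1}(p_{k_1},…,p_{k_n}) t. -/
theorem divDiff_shift (n : ℕ) (hn : 0 < n) (p c : Fin n → ℝ)
    (hp : Function.Injective p) (r : ℕ) (t : ℝ) :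
    divDiffFin n p (fun k => c k + p k ^ r * t)
      = divDiffFin n p c + hsymZ n ((r : ℤ) - n + 1) p * t :=
  divDiff_shift_general n p c hp r t
end

section
/- With phases θ_k = Σ_{r=1}^N p_k^r t^{(r)} + c_k and critical values t^{(n-1)}_{k_1…k_n} = -Σ_{r=1}^{N+1-n} h_r(p_{k_1},…,p_{k_n}) t^{(n+r-1)} - c_{k_1…k_n}, the identity t^{(n-1)}_{k_1…\hat{k_i}…k_{n+1}} - t^{(n-1)}_{k_1…\hat{k_j}…k_{n+1}} = (p_{k_i} - p_{k_j})(t^{(n)} - t^{(n)}_{k_1…k_{n+1}}) holds for all i, j ∈ {1,…,n+1} and all values of the variables t^{(n)},…,t^{(N)}. -/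
/-!
Deleting a node `x` from `s` is affine in `p x` on both ingredients of a critical value:
`h_{r+1}(s \ x) = h_{r+1}(s) - p x * h_r(s)` (split the monomials by whether they contain `x`), and
`c_{s \ x} = Σ_{a ∈ s} (p a - p x) * c a / ∏_{b ≠ a} (p a - p b)`. Hence
`t_{s \ i} - t_{s \ j} = (p i - p j) * (Σ_{r ≥ 0} h_r(s) t^{(n+r)} + c_s)`, and since `h_0 = 1` the bracket
is `t^{(n)} - t_s`.
-/

/-- Divided difference over a finite index set. -/
noncomputable def divDiff {ι : Type*} [DecidableEq ι] (p c : ι → ℝ) (s : Finset ι) : ℝ :=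
  ∑ a ∈ s, c a / ∏ b ∈ s.erase a, (p a - p b)

/-- Complete homogeneous symmetric polynomial of degree m over a finite set. -/
noncomputable def hS {ι : Type*} [DecidableEq ι] (p : ι → ℝ) (s : Finset ι) (m : ℕ) : ℝ :=
  ∑ d ∈ s.sym m, ((d : Multiset ι).map p).prod

/-- The critical value t^{(card s - 1)} for the phase coincidence over s:
t^{(s-1)} = -Σ_{r=1}^{N+1-s} h_r T^{(s+r-1)} - c_s. -/
noncomputable def tcrit {ι : Type*} [DecidableEq ι] (N : ℕ) (p c : ι → ℝ)
    (T : ℕ → ℝ) (s : Finset ι) : ℝ :=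
  -(∑ r ∈ Finset.Icc 1 (N + 1 - s.card), hS p s r * T (s.card + r - 1)) -
    divDiff p c s

lemma hS_zero {ι : Type*} [DecidableEq ι] (p : ι → ℝ) (s : Finset ι) : hS p s 0 = 1 := by
  simp only [hS, Finset.sym_zero, Finset.sum_singleton]
  rfl

lemma hS_succ {ι : Type*} [DecidableEq ι] (p : ι → ℝ) {s : Finset ι} {i : ι} (hi : i ∈ s)
    (m : ℕ) : hS p s (m + 1) = hS p (s.erase i) (m + 1) + p i * hS p s m := by
  unfold hS
  rw [← Finset.sum_filter_add_sum_filter_not (s.sym (m + 1)) (fun d => i ∈ d), add_comm,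
    Finset.mul_sum]
  congr 1
  · refine Finset.sum_congr ?_ fun _ _ => rfl
    ext d
    simp only [Finset.mem_filter, Finset.mem_sym_iff, Finset.mem_erase]
    exact ⟨fun ⟨hs, hd⟩ a ha => ⟨fun h => hd (h ▸ ha), hs a ha⟩,
      fun h => ⟨fun a ha => (h a ha).2, fun hid => (h i hid).1 rfl⟩⟩
  · refine Finset.sum_bij' (fun d hd => d.erase i (Finset.mem_filter.1 hd).2)
      (fun d _ => i ::ₛ d) ?_ ?_ ?_ ?_ ?_
    · intro d hd
      simp only [Finset.mem_filter, Finset.mem_sym_iff] at hd ⊢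
      exact fun a ha => hd.1 a (Multiset.mem_of_mem_erase ha)
    · intro d hd
      simp only [Finset.mem_filter, Finset.mem_sym_iff, Sym.mem_cons] at hd ⊢
      exact ⟨by rintro a (rfl | ha); exacts [hi, hd a ha], Or.inl trivial⟩
    · exact fun d hd => Sym.cons_erase _
    · exact fun d _ => Sym.erase_cons_head d i
    · intro d hd
      conv_lhs => rw [← Sym.cons_erase (Finset.mem_filter.1 hd).2]
      rw [Sym.coe_cons, Multiset.map_cons, Multiset.prod_cons]

lemma divDiff_erase {ι : Type*} [DecidableEq ι] {p : ι → ℝ} (c : ι → ℝ) {s : Finset ι}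
    (hp : Set.InjOn p s) {x : ι} (hx : x ∈ s) :
    divDiff p c (s.erase x) = ∑ a ∈ s, (p a - p x) * (c a / ∏ b ∈ s.erase a, (p a - p b)) := by
  rw [divDiff, ← Finset.sum_erase s (by simp : (p x - p x) * _ = 0)]
  refine Finset.sum_congr rfl fun a ha => ?_
  obtain ⟨hax, has⟩ := Finset.mem_erase.1 ha
  have hxa : x ∈ s.erase a := Finset.mem_erase.2 ⟨hax.symm, hx⟩
  have hne : p a - p x ≠ 0 := sub_ne_zero.2 fun h => hax (hp has hx h)
  rw [Finset.erase_right_comm, ← Finset.mul_prod_erase _ _ hxa, ← div_div, div_right_comm,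
    mul_div_cancel₀ _ hne]

lemma divDiff_erase_sub_divDiff_erase {ι : Type*} [DecidableEq ι] {p : ι → ℝ} (c : ι → ℝ)
    {s : Finset ι} (hp : Set.InjOn p s) {i j : ι} (hi : i ∈ s) (hj : j ∈ s) :
    divDiff p c (s.erase i) - divDiff p c (s.erase j) = (p j - p i) * divDiff p c s := by
  rw [divDiff_erase c hp hi, divDiff_erase c hp hj, ← Finset.sum_sub_distrib, divDiff,
    Finset.mul_sum]
  exact Finset.sum_congr rfl fun a _ => by ring

lemma tcrit_eq_sum_range {ι : Type*} [DecidableEq ι] (N : ℕ) (p c : ι → ℝ) (T : ℕ → ℝ)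
    (s : Finset ι) :
    tcrit N p c T s =
      -(∑ r ∈ Finset.range (N + 1 - s.card), hS p s (r + 1) * T (s.card + r)) - divDiff p c s := by
  rw [tcrit, ← Finset.Ico_add_one_right_eq_Icc, Finset.sum_Ico_eq_sum_range, Nat.add_sub_cancel]
  simp only [add_comm 1, ← add_assoc, Nat.add_sub_cancel]

section tcrit

variable {ι : Type*} [DecidableEq ι] (N : ℕ) {p : ι → ℝ} (c : ι → ℝ) (T : ℕ → ℝ) {s : Finset ι}

lemma tcrit_erase {n : ℕ} (hs : s.card = n + 1) {x : ι} (hx : x ∈ s) :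
    tcrit N p c T (s.erase x) =
      -(∑ r ∈ Finset.range (N + 1 - n), (hS p s (r + 1) - p x * hS p s r) * T (n + r)) -
        divDiff p c (s.erase x) := by
  rw [tcrit_eq_sum_range, Finset.card_erase_of_mem hx, hs, Nat.add_sub_cancel]
  congr 2
  refine Finset.sum_congr rfl fun r _ => ?_
  rw [hS_succ p hx r, add_sub_cancel_right]

lemma sum_range_hS_mul_eq_sub_tcrit {n : ℕ} (hs : s.card = n + 1) (hN : n ≤ N) :
    ∑ r ∈ Finset.range (N + 1 - n), hS p s r * T (n + r) =
      T n - tcrit N p c T s - divDiff p c s := by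
  rw [tcrit_eq_sum_range, hs, show N + 1 - n = N + 1 - (n + 1) + 1 by omega,
    Finset.sum_range_succ', hS_zero]
  simp only [add_assoc, add_comm 1, add_zero, one_mul]
  ring

theorem tcrit_erase_sub_tcrit_erase {n : ℕ} (hp : Set.InjOn p s) (hs : s.card = n + 1)
    (hN : n ≤ N) {i j : ι} (hi : i ∈ s) (hj : j ∈ s) :
    tcrit N p c T (s.erase i) - tcrit N p c T (s.erase j) =
      (p i - p j) * (T n - tcrit N p c T s) := by
  rw [tcrit_erase N c T hs hi, tcrit_erase N c T hs hj]
  simp only [sub_mul, Finset.sum_sub_distrib, mul_assoc, ← Finset.mul_sum]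
  linear_combination (p i - p j) * sum_range_hS_mul_eq_sub_tcrit N c T hs hN -
    divDiff_erase_sub_divDiff_erase c hp hi hj

end tcrit

theorem tcrit_difference_general (N n : ℕ) (hN : n ≤ N)
    (p c : Fin (n + 1) → ℝ) (hp : Function.Injective p) (T : ℕ → ℝ)
    (i j : Fin (n + 1)) :
    tcrit N p c T (Finset.univ.erase i) - tcrit N p c T (Finset.univ.erase j)
      = (p i - p j) * (T n - tcrit N p c T Finset.univ) :=
  tcrit_erase_sub_tcrit_erase N c T hp.injOn (by simp) hN (Finset.mem_univ i) (Finset.mem_univ j)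

/-- t^{(n-1)}_{k_1…k̂_i…k_{n+1}} - t^{(n-1)}_{k_1…k̂_j…k_{n+1}}
  = (p_{k_i} - p_{k_j})(t^{(n)} - t^{(n)}_{k_1…k_{n+1}}). -/
theorem tcrit_difference (N n : ℕ) (hn : 1 ≤ n) (hN : n ≤ N)
    (p c : Fin (n + 1) → ℝ) (hp : Function.Injective p) (T : ℕ → ℝ)
    (i j : Fin (n + 1)) :
    tcrit N p c T (Finset.univ.erase i) - tcrit N p c T (Finset.univ.erase j)
      = (p i - p j) * (T n - tcrit N p c T Finset.univ) :=
  tcrit_difference_general N n hN p c hp T i j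
end

section
/- For {k_1,…,k_{n+1}} with pairwise distinct p's, the phase difference satisfies θ_{k_1} - θ_{k_{n+1}} = -Σ_{r=1}^n (∏_{j=1}^r (p_{k_{n+1}} - p_{k_j})) (t^{(r)} - t^{(r)}_{k_1…k_{r+1}}), where θ_k = Σ_{r=1}^N p_k^r t^{(r)} + c_k and t^{(r)}_{k_1…k_{r+1}} are the critical values determined by the coincidence θ_{k_1} = … = θ_{k_{r+1}} (solved for t^{(1)},…,t^{(r)} in terms of t^{(r+1)},…,t^{(N)}). -/
/-!
Write `D_r` for `θ_{k_1} - θ_{k_{n+1}}` evaluated at the critical times of level `r`, so that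
`D_0` is the actual phase difference and `D_n = 0`. Passing from level `r - 1` to level `r` only
changes `t^{(1)}, …, t^{(r)}`, so the change of `θ_k` is a polynomial of degree `≤ r` in `p_k`
with leading coefficient `t^{(r)}_{k_1…k_{r+1}} - t^{(r)}`; it takes one and the same value at
`p_{k_1}, …, p_{k_r}`, since these phases coincide at both levels. Such a polynomial is a constant
plus its leading coefficient times `∏_{j ≤ r} (x - p_{k_j})`, and the increments `D_r - D_{r-1}`
telescope.
-/

open Finset Polynomial

theorem Finset.sum_Icc_one_sub_pred {M : Type*} [AddCommGroup M] (f : ℕ → M) (n : ℕ) :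
    ∑ r ∈ Icc 1 n, (f r - f (r - 1)) = f n - f 0 := by
  induction n with
  | zero => simp
  | succ n ih => rw [sum_Icc_succ_top (by omega), ih, Nat.add_sub_cancel, sub_add_sub_cancel']

theorem Polynomial.degree_lt_of_natDegree_le_of_coeff_eq_zero {R : Type*} [Semiring R]
    {q : R[X]} {n : ℕ} (hq : q.natDegree ≤ n) (hn : q.coeff n = 0) : q.degree < n := by
  rw [degree_lt_iff_coeff_zero]
  intro m hm
  rcases (Nat.cast_le.mp hm).eq_or_lt with rfl | hlt
  · exact hn
  · exact coeff_eq_zero_of_natDegree_lt (hq.trans_lt hlt)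

theorem Polynomial.eq_C_add_C_coeff_mul_nodal {F ι : Type*} [Field F] {s : Finset ι}
    {v : ι → F} (hvs : Set.InjOn v s) {q : F[X]} (hq : q.natDegree ≤ #s) {i₀ : ι}
    (hi₀ : i₀ ∈ s) (hval : ∀ i ∈ s, q.eval (v i) = q.eval (v i₀)) :
    q = C (q.eval (v i₀)) + C (q.coeff #s) * Lagrange.nodal s v := by
  have hs : #s ≠ 0 := card_ne_zero_of_mem hi₀
  set P := C (q.eval (v i₀)) + C (q.coeff #s) * Lagrange.nodal s v
  have hnodal : (Lagrange.nodal s v).coeff #s = 1 :=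
    Lagrange.natDegree_nodal (s := s) (v := v) ▸ Lagrange.nodal_monic.coeff_natDegree
  have hP : P.natDegree ≤ #s :=
    natDegree_add_le_of_degree_le ((natDegree_C _).trans_le (Nat.zero_le _))
      ((natDegree_C_mul_le _ _).trans Lagrange.natDegree_nodal.le)
  refine eq_of_degree_sub_lt_of_eval_index_eq s hvs ?_ fun i hi => ?_
  · refine degree_lt_of_natDegree_le_of_coeff_eq_zero
      ((natDegree_sub_le_of_le hq hP).trans (max_self _).le) ?_
    simp [P, coeff_C, hs, hnodal]
  · simp [P, hval i hi, Lagrange.eval_nodal_at_node hi]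

section Phase

variable {ι R : Type*}

def phase [CommRing R] (N : ℕ) (p c : ι → R) (t : ℕ → R) (k : ι) : R :=
  ∑ s ∈ Icc 1 N, p k ^ s * t s + c k

noncomputable def phasePoly [CommRing R] (N : ℕ) (t : ℕ → R) : R[X] :=
  ∑ s ∈ Icc 1 N, monomial s (t s)

theorem coeff_phasePoly [CommRing R] (N : ℕ) (t : ℕ → R) (m : ℕ) :
    (phasePoly N t).coeff m = if m ∈ Icc 1 N then t m else 0 := by
  simp [phasePoly, finsetSum_coeff, coeff_monomial]

theorem phase_sub_phase [CommRing R] (N : ℕ) (p c : ι → R) (t u : ℕ → R) (k : ι) :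
    phase N p c t k - phase N p c u k = (phasePoly N (t - u)).eval (p k) := by
  simp only [phase, phasePoly, add_sub_add_right_eq_sub, ← sum_sub_distrib, eval_finsetSum,
    eval_monomial, Pi.sub_apply]
  exact sum_congr rfl fun _ _ => by ring

theorem phase_congr [CommRing R] {N : ℕ} (p c : ι → R) {t u : ℕ → R}
    (h : ∀ s ∈ Icc 1 N, t s = u s) : phase N p c t = phase N p c u :=
  funext fun k => congrArg (· + c k) (sum_congr rfl fun s hs => by rw [h s hs])

theorem phase_gap_sub_phase_gap [Field R] {N r : ℕ} (hr : 0 < r) (hrN : r ≤ N) {p c : ι → R}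
    {k : ℕ → ι} (hk : Set.InjOn (p ∘ k) (range r)) {u w : ℕ → R}
    (huw : ∀ s, r < s → u s = w s) (hu : ∀ j < r, phase N p c u (k j) = phase N p c u (k 0))
    (hw : ∀ j < r, phase N p c w (k j) = phase N p c w (k 0)) (ℓ : ι) :
    (phase N p c u (k 0) - phase N p c u ℓ) - (phase N p c w (k 0) - phase N p c w ℓ) =
      (∏ j ∈ range r, (p ℓ - p (k j))) * (w r - u r) := by
  set q := phasePoly N (u - w)
  have hdeg : q.natDegree ≤ #(range r) := by
    rw [card_range, natDegree_le_iff_coeff_eq_zero]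
    intro m hm
    simp [q, coeff_phasePoly, huw m hm]
  have hval : ∀ j ∈ range r, q.eval (p (k j)) = q.eval (p (k 0)) := fun j hj => by
    rw [← phase_sub_phase, ← phase_sub_phase, hu j (mem_range.1 hj), hw j (mem_range.1 hj)]
  have hcoeff : q.coeff r = u r - w r := by simp [q, coeff_phasePoly, hr.ne', hrN]
  have := congrArg (eval (p ℓ)) (eq_C_add_C_coeff_mul_nodal hk hdeg (mem_range.2 hr) hval)
  simp only [eval_add, eval_C, eval_mul, Lagrange.eval_nodal, card_range, hcoeff,
    Function.comp_apply] at this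
  linear_combination phase_sub_phase N p c u w (k 0) - phase_sub_phase N p c u w ℓ - this

end Phase

theorem phase_difference_telescoping_general (N n : ℕ) (hN : n ≤ N)
    (p c : Fin (n + 1) → ℝ) (hp : Function.Injective p)
    (T : ℕ → ℝ) (T' : ℕ → ℕ → ℝ)
    (hagree : ∀ r s : ℕ, r < s → T' r s = T s)
    (hcoin : ∀ r : ℕ, 1 ≤ r → r ≤ n → ∀ a b : Fin (n + 1), (a : ℕ) ≤ r → (b : ℕ) ≤ r →
      (∑ s ∈ Finset.Icc 1 N, p a ^ s * T' r s) + c a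
        = (∑ s ∈ Finset.Icc 1 N, p b ^ s * T' r s) + c b) :
    ((∑ s ∈ Finset.Icc 1 N, p 0 ^ s * T s) + c 0) -
        ((∑ s ∈ Finset.Icc 1 N, p (Fin.last n) ^ s * T s) + c (Fin.last n))
      = -∑ r ∈ Finset.Icc 1 n,
          (∏ j ∈ Finset.range r, (p (Fin.last n) - p (Fin.ofNat (n + 1) j))) *
            (T r - T' r r) := by
  have hcoin_le : ∀ r ≤ n, ∀ a b : Fin (n + 1), (a : ℕ) ≤ r → (b : ℕ) ≤ r →
      phase N p c (T' r) a = phase N p c (T' r) b := by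
    intro r hr a b ha hb
    rcases Nat.eq_zero_or_pos r with rfl | hr₀
    · rw [Fin.ext (a := a) (b := b) (by omega)]
    · exact hcoin r hr₀ hr a b ha hb
  have hnode : ∀ j < n + 1, (Fin.ofNat (n + 1) j : ℕ) = j := fun j hj => Nat.mod_eq_of_lt hj
  let D r := phase N p c (T' r) 0 - phase N p c (T' r) (Fin.last n)
  have hstep : ∀ r ∈ Icc 1 n, D r - D (r - 1) =
      (∏ j ∈ range r, (p (Fin.last n) - p (Fin.ofNat (n + 1) j))) * (T r - T' r r) := by
    intro r hr
    rw [mem_Icc] at hr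
    have hk : Set.InjOn (p ∘ Fin.ofNat (n + 1)) (range r) := fun i hi j hj hij => by
      simpa only [hnode i (by simp at hi; omega), hnode j (by simp at hj; omega)] using
        congrArg Fin.val (hp hij)
    have := phase_gap_sub_phase_gap hr.1 (hr.2.trans hN) hk
      (fun s hs => (hagree r s hs).trans (hagree (r - 1) s (by omega)).symm)
      (fun j hj => hcoin_le r hr.2 _ _ (by rw [hnode j (by omega)]; omega) (by simp))
      (fun j hj => hcoin_le (r - 1) (by omega) _ _ (by rw [hnode j (by omega)]; omega) (by simp))
      (Fin.last n)
    rwa [hagree (r - 1) r (by omega)] at this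
  calc _ = D 0 - D n := by
        simp only [D, hcoin_le n le_rfl 0 (Fin.last n) (by simp) (by simp), sub_self, sub_zero,
          phase_congr p c fun s hs => hagree 0 s (mem_Icc.1 hs).1]
        rfl
    _ = -∑ r ∈ Icc 1 n, (D r - D (r - 1)) := by rw [sum_Icc_one_sub_pred]; ring
    _ = _ := by rw [sum_congr rfl hstep]

/-- θ_{k_1} - θ_{k_{n+1}} = -Σ_{r=1}^n (∏_{j=1}^r (p_{k_{n+1}} - p_{k_j}))
(t^{(r)} - t^{(r)}_{k_1…k_{r+1}}), where the critical values t^{(r)}_{k_1…k_{r+1}}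
are characterized as those time values (agreeing with the actual times above level r)
at which the phases θ_{k_1},…,θ_{k_{r+1}} all coincide. -/
theorem phase_difference_telescoping (N n : ℕ) (hn : 1 ≤ n) (hN : n ≤ N)
    (p c : Fin (n + 1) → ℝ) (hp : Function.Injective p)
    (T : ℕ → ℝ) (T' : ℕ → ℕ → ℝ)
    (hagree : ∀ r s : ℕ, r < s → T' r s = T s)
    (hcoin : ∀ r : ℕ, 1 ≤ r → r ≤ n → ∀ a b : Fin (n + 1), (a : ℕ) ≤ r → (b : ℕ) ≤ r →
      (∑ s ∈ Finset.Icc 1 N, p a ^ s * T' r s) + c a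
        = (∑ s ∈ Finset.Icc 1 N, p b ^ s * T' r s) + c b) :
    ((∑ s ∈ Finset.Icc 1 N, p 0 ^ s * T s) + c 0) -
        ((∑ s ∈ Finset.Icc 1 N, p (Fin.last n) ^ s * T s) + c (Fin.last n))
      = -∑ r ∈ Finset.Icc 1 n,
          (∏ j ∈ Finset.range r, (p (Fin.last n) - p (Fin.ofNat (n + 1) j))) *
            (T r - T' r r) :=
  phase_difference_telescoping_general N n hN p c hp T T' hagree hcoin
end
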